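/- Let U : C* → C be a reasonable expansion with unique restrictions which has the expansion property, where all morphisms of C are mono and C* is directed. Then for every object A of C: t_C(A) = Σ_{𝒜 ∈ U⁻¹(A)} t_{C*}(𝒜). In particular, t_C(A) is finite if and only if U⁻¹(A) is finite and t_{C*}(𝒜) is finite for every 𝒜 ∈ U⁻¹(A). -/

import Mathlib

open CategoryTheory

universe v u v' u'

def RamseyArrow (C : Type u) [Category.{v} C] (A B Z : C) (k t : ℕ) : Prop :=
  ∀ χ : (A ⟶ Z) → Fin k, ∃ w : B ⟶ Z,
    (Set.range fun f : A ⟶ B => χ (f ≫ w)).ncard ≤ t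

noncomputable def ramseyDeg (C : Type u) [Category.{v} C] (A : C) : ℕ∞ :=
  sInf {n : ℕ∞ | ∃ m : ℕ, n = (m : ℕ∞) ∧ 1 ≤ m ∧
    ∀ k : ℕ, 2 ≤ k → ∀ B : C, ∃ Z : C, RamseyArrow C A B Z k m}

variable {C : Type u} [Category.{v} C] {D : Type u'} [Category.{v'} D]

def InHom (U : D ⥤ C) {A : C} (X Y : D) (h : U.obj X = A) (e : A ⟶ U.obj Y) : Prop :=
  ∃ f : X ⟶ Y, U.map f = eqToHom h ≫ e

def ObjSurjective (U : D ⥤ C) : Prop := ∀ A : C, ∃ X : D, U.obj X = A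

def HomInjective (U : D ⥤ C) : Prop :=
  ∀ (X Y : D) (f g : X ⟶ Y), U.map f = U.map g → f = g

def HasUniqueRestrictions (U : D ⥤ C) : Prop :=
  ∀ (Y : D) (A : C) (e : A ⟶ U.obj Y),
    ∃! X : {Z : D // U.obj Z = A}, InHom U X.1 Y X.2 e

def Reasonable (U : D ⥤ C) : Prop :=
  ∀ (A B : C) (e : A ⟶ B) (X : D) (h : U.obj X = A),
    ∃ (Y : D) (h' : U.obj Y = B) (f : X ⟶ Y),
      U.map f = eqToHom h ≫ e ≫ eqToHom h'.symm

def ExpansionProperty (U : D ⥤ C) : Prop :=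
  ∀ A : C, ∃ B : C, ∀ X Y : D, U.obj X = A → U.obj Y = B → Nonempty (X ⟶ Y)

/-!
Restricting along `U` identifies `A ⟶ U.obj Y` with the disjoint union, over the expansions `X`
of `A`, of the hom-sets `X ⟶ Y`, compatibly with postcomposition by `U.map`. So a colouring of
`A ⟶ U.obj Z` is a family of colourings of the sets `X ⟶ Z`.

Upper bound: applying the Ramsey property of the finitely many expansions one after another gives
a single `w : B ⟶ U.obj Z` on which each expansion `X` sees at most `t(X)` colours.

Lower bound: glue bad colourings of the expansions, using disjoint palettes. Directedness and the
expansion property give an object `B` of `C` such that the test objects of all the bad colourings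
map into every expansion of `B`; hence every `w : B ⟶ Z` sees at least the sum of the degrees
many colours.
-/

namespace ENat

lemma summable {ι : Type*} (f : ι → ℕ∞) : Summable f :=
  (hasSum_of_isLUB _ (isLUB_iSup : IsLUB (Set.range fun s : Finset ι => ∑ i ∈ s, f i) _)).summable

lemma tsum_ne_top_iff {ι : Type*} {f : ι → ℕ∞} (hf : ∀ i, f i ≠ 0) :
    ∑' i, f i ≠ ⊤ ↔ Finite ι ∧ ∀ i, f i ≠ ⊤ := by
  constructor
  · intro h
    have hfin : Finite ι := by
      by_contra hinf
      rw [not_finite_iff_infinite] at hinf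
      refine h (eq_top_iff_forall_ge.2 fun N => ?_)
      obtain ⟨s, rfl⟩ := Infinite.exists_subset_card_eq ι N
      calc (s.card : ℕ∞) = ∑ _ ∈ s, 1 := by simp
        _ ≤ ∑ i ∈ s, f i := Finset.sum_le_sum fun i _ => Order.one_le_iff_ne_zero.2 (hf i)
        _ ≤ ∑' i, f i := (summable f).sum_le_tsum s fun _ _ => zero_le
    exact ⟨hfin, fun i hi => h (top_le_iff.1 (hi ▸ (summable f).le_tsum i fun _ _ => zero_le))⟩
  · rintro ⟨hfin, hne⟩
    have := Fintype.ofFinite ι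
    rw [tsum_fintype, Ne, sum_eq_top]
    simpa using hne

lemma sum_le_of_forall_natCast_le {ι : Type*} {s : Finset ι} {f : ι → ℕ∞} {n : ℕ}
    (h : ∀ p : ι → ℕ, (∀ i ∈ s, (p i : ℕ∞) ≤ f i) → ∑ i ∈ s, p i ≤ n) :
    ∑ i ∈ s, f i ≤ n := by
  by_cases htop : ∃ i ∈ s, f i = ⊤
  · classical
    obtain ⟨i, hi, hfi⟩ := htop
    have := h (fun j => if j = i then n + 1 else 0) fun j _ => by
      split_ifs with hj
      · simp [hj, hfi]
      · simp
    simp [Finset.sum_ite_eq', hi] at this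
  · push Not at htop
    calc ∑ i ∈ s, f i = ((∑ i ∈ s, (f i).toNat : ℕ) : ℕ∞) := by
          rw [Nat.cast_sum]
          exact Finset.sum_congr rfl fun i hi => (natCast_toNat (htop i hi)).symm
      _ ≤ n := by
          exact_mod_cast h (fun i => (f i).toNat) fun i hi => (natCast_toNat (htop i hi)).le

end ENat

lemma Set.sum_ncard_le_ncard_of_sigma_mk_mem {ι : Type*} [Fintype ι] {β : ι → Type*}
    {T : ∀ i, Set (β i)} (hT : ∀ i, (T i).Finite) {R : Set (Σ i, β i)} (hR : R.Finite)
    (h : ∀ i, ∀ b ∈ T i, (⟨i, b⟩ : Σ i, β i) ∈ R) : ∑ i, (T i).ncard ≤ R.ncard := by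
  have hdisj : Pairwise (Function.onFun Disjoint fun i => Sigma.mk i '' T i) := by
    intro i j hij
    refine Set.disjoint_left.2 ?_
    rintro _ ⟨b, -, rfl⟩ ⟨b', -, hb⟩
    exact hij (congrArg Sigma.fst hb).symm
  calc ∑ i, (T i).ncard = ∑ i, (Sigma.mk i '' T i).ncard := by
        simp only [Set.ncard_image_of_injective _ sigma_mk_injective]
    _ = (⋃ i, Sigma.mk i '' T i).ncard := by
        rw [Set.ncard_iUnion_of_finite (fun i => (hT i).image _) hdisj, finsum_eq_sum_of_fintype]
    _ ≤ R.ncard := Set.ncard_le_ncard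
        (Set.iUnion_subset fun i => Set.image_subset_iff.2 (h i)) hR

def IsRamseyBound (C : Type u) [Category.{v} C] (A : C) (m : ℕ) : Prop :=
  1 ≤ m ∧ ∀ k : ℕ, 2 ≤ k → ∀ B : C, ∃ Z : C, RamseyArrow C A B Z k m

lemma ramseyDeg_le {A : C} {m : ℕ} (h : IsRamseyBound C A m) : ramseyDeg C A ≤ m :=
  sInf_le ⟨m, rfl, h⟩

lemma ramseyDeg_ne_zero (A : C) : ramseyDeg C A ≠ 0 := by
  refine Order.one_le_iff_ne_zero.1 (le_sInf ?_)
  rintro _ ⟨m, rfl, hm, -⟩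
  exact_mod_cast hm

lemma exists_isRamseyBound_of_ramseyDeg_ne_top {A : C} (h : ramseyDeg C A ≠ ⊤) :
    ∃ m : ℕ, IsRamseyBound C A m ∧ ramseyDeg C A = m := by
  change sInf {n : ℕ∞ | ∃ m : ℕ, n = m ∧ IsRamseyBound C A m} ≠ ⊤ at h
  have hne : Set.Nonempty {n : ℕ∞ | ∃ m : ℕ, n = m ∧ IsRamseyBound C A m} := by
    by_contra hempty
    exact h (by rw [Set.not_nonempty_iff_eq_empty.1 hempty, sInf_empty])
  obtain ⟨m, hm, hbound⟩ := csInf_mem hne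
  exact ⟨m, hbound, hm⟩

lemma exists_bad_coloring {X : C} {p : ℕ} (h : (p : ℕ∞) ≤ ramseyDeg C X) :
    ∃ (k : ℕ) (B : C), 2 ≤ k ∧ ∀ Z : C, ∃ χ : (X ⟶ Z) → Fin k, ∀ v : B ⟶ Z,
      p ≤ (Set.range fun f : X ⟶ B => χ (f ≫ v)).ncard := by
  by_cases hp : p ≤ 1
  · refine ⟨2, X, le_rfl, fun Z => ⟨fun _ => 0, fun v => hp.trans ?_⟩⟩
    exact (Set.ncard_pos (Set.toFinite _)).2 ⟨_, 𝟙 X, rfl⟩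
  · have hnot : ¬ IsRamseyBound C X (p - 1) := fun hb => by
      have := h.trans (ramseyDeg_le hb)
      norm_cast at this
      omega
    simp only [IsRamseyBound, RamseyArrow, not_and, not_forall, not_exists, not_le] at hnot
    obtain ⟨k, hk, B, hB⟩ := hnot (by omega)
    refine ⟨k, B, hk, fun Z => ?_⟩
    obtain ⟨χ, hχ⟩ := hB Z
    exact ⟨χ, fun v => by have := hχ v; omega⟩

lemma RamseyArrow.exists_ncard_range_le {A B Z : C} {κ : Type*} [Fintype κ] {t : ℕ}
    (h : RamseyArrow C A B Z (Fintype.card κ) t) (χ : (A ⟶ Z) → κ) :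
    ∃ w : B ⟶ Z, (Set.range fun f : A ⟶ B => χ (f ≫ w)).ncard ≤ t := by
  let e := Fintype.equivFin κ
  obtain ⟨w, hw⟩ := h (e ∘ χ)
  refine ⟨w, ?_⟩
  rwa [← Set.ncard_image_of_injective _ e.injective, ← Set.range_comp]

lemma exists_ramseyArrow_simultaneous {ι : Type*} (X : ι → D) (t : ι → ℕ) {k : ℕ} (s : Finset ι)
    (h : ∀ i ∈ s, ∀ B : D, ∃ Z : D, RamseyArrow D (X i) B Z k (t i)) (B : D) :
    ∃ Z : D, ∀ χ : ∀ i, (X i ⟶ Z) → Fin k, ∃ w : B ⟶ Z,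
      ∀ i ∈ s, (Set.range fun f : X i ⟶ B => χ i (f ≫ w)).ncard ≤ t i := by
  classical
  induction s using Finset.induction_on generalizing B with
  | empty => exact ⟨B, fun _ => ⟨𝟙 B, by simp⟩⟩
  | insert a s _ ih =>
    obtain ⟨Z₁, hZ₁⟩ := h a (Finset.mem_insert_self a s) B
    obtain ⟨Z, hZ⟩ := ih (fun i hi => h i (Finset.mem_insert_of_mem hi)) Z₁
    refine ⟨Z, fun χ => ?_⟩
    obtain ⟨v, hv⟩ := hZ χ
    obtain ⟨w, hw⟩ := hZ₁ fun f => χ a (f ≫ v)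
    refine ⟨w ≫ v, fun i hi => ?_⟩
    rcases Finset.mem_insert.1 hi with rfl | hi
    · simpa using hw
    · refine le_trans (Set.ncard_le_ncard ?_ (Set.toFinite _)) (hv i hi)
      rintro _ ⟨f, rfl⟩
      exact ⟨f ≫ w, by simp⟩

lemma exists_cocone_of_directed [Nonempty D]
    (hdir : ∀ X Y : D, ∃ Z : D, Nonempty (X ⟶ Z) ∧ Nonempty (Y ⟶ Z))
    {ι : Type*} [Finite ι] (B : ι → D) : ∃ T : D, ∀ i, Nonempty (B i ⟶ T) := by
  classical
  have := Fintype.ofFinite ι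
  have : IsTrans D fun X Y => Nonempty (X ⟶ Y) := ⟨fun _ _ _ ⟨f⟩ ⟨g⟩ => ⟨f ≫ g⟩⟩
  obtain ⟨T, hT⟩ := Directed.finset_le (r := fun X Y : D => Nonempty (X ⟶ Y)) (f := id)
    (fun X Y => hdir X Y) (Finset.univ.image B)
  exact ⟨T, fun i => hT _ (Finset.mem_image_of_mem B (Finset.mem_univ i))⟩

def sigmaFiberHom (U : D ⥤ C) (A : C) (Y : D) :
    (Σ X : {X : D // U.obj X = A}, X.1 ⟶ Y) → (A ⟶ U.obj Y) :=
  fun g => eqToHom g.1.2.symm ≫ U.map g.2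

variable {U : D ⥤ C}

lemma sigmaFiberHom_comp_map {A : C} {Y Y' : D} (g : Σ X : {X : D // U.obj X = A}, X.1 ⟶ Y)
    (v : Y ⟶ Y') : sigmaFiberHom U A Y g ≫ U.map v = sigmaFiberHom U A Y' ⟨g.1, g.2 ≫ v⟩ := by
  simp [sigmaFiberHom]

lemma sigmaFiberHom_surjective (hur : HasUniqueRestrictions U) (A : C) (Y : D) :
    Function.Surjective (sigmaFiberHom U A Y) := fun e => by
  obtain ⟨X, ⟨g, hg⟩, -⟩ := hur Y A e
  exact ⟨⟨X, g⟩, by simp [sigmaFiberHom, hg]⟩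

lemma sigmaFiberHom_injective (hinj : HomInjective U) (hur : HasUniqueRestrictions U)
    (A : C) (Y : D) : Function.Injective (sigmaFiberHom U A Y) := by
  rintro ⟨X, g⟩ ⟨X', g'⟩ h
  have hin : ∀ (Z : {X : D // U.obj X = A}) (f : Z.1 ⟶ Y),
      InHom U Z.1 Y Z.2 (sigmaFiberHom U A Y ⟨Z, f⟩) := fun Z f => ⟨f, by simp [sigmaFiberHom]⟩
  obtain rfl : X = X' := (hur Y A _).unique (hin X g) (h ▸ hin X' g')
  obtain rfl : g = g' := hinj _ _ g g' ((cancel_epi (eqToHom _)).1 h)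
  rfl

lemma isRamseyBound_sum_fiber (hsurj : ObjSurjective U) (hur : HasUniqueRestrictions U) {A : C}
    [Fintype {X : D // U.obj X = A}] (t : {X : D // U.obj X = A} → ℕ)
    (ht : ∀ X, IsRamseyBound D X.1 (t X)) : IsRamseyBound C A (∑ X, t X) := by
  refine ⟨?_, fun k hk B => ?_⟩
  · obtain ⟨X, hX⟩ := hsurj A
    exact (ht ⟨X, hX⟩).1.trans (Finset.single_le_sum (by simp) (Finset.mem_univ _))
  obtain ⟨B₀, rfl⟩ := hsurj B
  obtain ⟨Z, hZ⟩ := exists_ramseyArrow_simultaneous Subtype.val t Finset.univ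
    (fun X _ => (ht X).2 k hk) B₀
  refine ⟨U.obj Z, fun χ => ?_⟩
  obtain ⟨v, hv⟩ := hZ fun X g => χ (sigmaFiberHom U A Z ⟨X, g⟩)
  refine ⟨U.map v, ?_⟩
  have hsub : (Set.range fun e : A ⟶ U.obj B₀ => χ (e ≫ U.map v)) ⊆
      ⋃ X, Set.range fun g : X.1 ⟶ B₀ => χ (sigmaFiberHom U A Z ⟨X, g ≫ v⟩) := by
    rintro _ ⟨e, rfl⟩
    obtain ⟨g, rfl⟩ := sigmaFiberHom_surjective hur A B₀ e
    exact Set.mem_iUnion.2 ⟨g.1, g.2, congrArg χ (sigmaFiberHom_comp_map g v).symm⟩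
  calc _ ≤ _ := Set.ncard_le_ncard hsub (Set.toFinite _)
    _ ≤ _ := Set.ncard_iUnion_le_of_fintype _
    _ ≤ ∑ X, t X := Finset.sum_le_sum fun X _ => hv X (Finset.mem_univ X)

lemma ramseyDeg_le_tsum_fiber (hsurj : ObjSurjective U) (hur : HasUniqueRestrictions U) {A : C}
    [Finite {X : D // U.obj X = A}] (h : ∀ X : {X : D // U.obj X = A}, ramseyDeg D X.1 ≠ ⊤) :
    ramseyDeg C A ≤ ∑' X : {X : D // U.obj X = A}, ramseyDeg D X.1 := by
  have := Fintype.ofFinite {X : D // U.obj X = A}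
  choose t ht hdeg using fun X => exists_isRamseyBound_of_ramseyDeg_ne_top (h X)
  calc ramseyDeg C A ≤ ((∑ X, t X : ℕ) : ℕ∞) :=
        ramseyDeg_le (isRamseyBound_sum_fiber hsurj hur t ht)
    _ = _ := by simp [tsum_fintype, hdeg]

lemma exists_obj_forall_preimage_nonempty_hom
    (hdir : ∀ X Y : D, ∃ Z : D, Nonempty (X ⟶ Z) ∧ Nonempty (Y ⟶ Z))
    (hexp : ExpansionProperty U) [Nonempty D] {ι : Type*} [Finite ι] (B : ι → D) :
    ∃ B' : C, ∀ Y : D, U.obj Y = B' → ∀ i, Nonempty (B i ⟶ Y) := by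
  obtain ⟨T, hT⟩ := exists_cocone_of_directed hdir B
  obtain ⟨B', hB'⟩ := hexp (U.obj T)
  exact ⟨B', fun Y hY i => ⟨(hT i).some ≫ (hB' T Y rfl hY).some⟩⟩

lemma sum_le_of_isRamseyBound
    (hdir : ∀ X Y : D, ∃ Z : D, Nonempty (X ⟶ Z) ∧ Nonempty (Y ⟶ Z))
    (hsurj : ObjSurjective U) (hinj : HomInjective U) (hur : HasUniqueRestrictions U)
    (hexp : ExpansionProperty U) {A : C} {n : ℕ} (hn : IsRamseyBound C A n)
    (s : Finset {X : D // U.obj X = A}) (p : {X : D // U.obj X = A} → ℕ)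
    (hp : ∀ X ∈ s, (p X : ℕ∞) ≤ ramseyDeg D X.1) : ∑ X ∈ s, p X ≤ n := by
  classical
  rcases s.eq_empty_or_nonempty with rfl | ⟨X₀, hX₀⟩
  · simp
  choose k B hk hbad using fun X : s => exists_bad_coloring (hp X X.2)
  have : Nonempty D := ⟨X₀.1⟩
  obtain ⟨B', hB'⟩ := exists_obj_forall_preimage_nonempty_hom hdir hexp B
  have hcard : 2 ≤ Fintype.card (Σ X : s, Fin (k X)) := by
    simp only [Fintype.card_sigma, Fintype.card_fin]
    exact (hk ⟨X₀, hX₀⟩).trans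
      (Finset.single_le_sum (f := k) (fun _ _ => Nat.zero_le _) (Finset.mem_univ _))
  obtain ⟨Z, hZ⟩ := hn.2 _ hcard B'
  obtain ⟨Z, rfl⟩ := hsurj Z
  choose χ hχ using fun X => hbad X Z
  have hbij : Function.Bijective (sigmaFiberHom U A Z) :=
    ⟨sigmaFiberHom_injective hinj hur A Z, sigmaFiberHom_surjective hur A Z⟩
  let c : (Σ X : {X : D // U.obj X = A}, X.1 ⟶ Z) → Σ X : s, Fin (k X) := fun g =>
    if h : g.1 ∈ s then ⟨⟨g.1, h⟩, χ ⟨g.1, h⟩ g.2⟩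
    else ⟨⟨X₀, hX₀⟩, ⟨0, by have := hk ⟨X₀, hX₀⟩; omega⟩⟩
  obtain ⟨w, hw⟩ := hZ.exists_ncard_range_le (c ∘ (Equiv.ofBijective _ hbij).symm)
  obtain ⟨⟨Bh, wh⟩, rfl⟩ := sigmaFiberHom_surjective hur B' Z w
  let d (X : s) : B X ⟶ Bh.1 := (hB' Bh.1 Bh.2 X).some
  let palette (X : s) : Set (Fin (k X)) := Set.range fun f : X.1.1 ⟶ B X => χ X (f ≫ d X ≫ wh)
  have hpalette : ∀ X, ∀ x ∈ palette X, (⟨X, x⟩ : Σ X : s, Fin (k X)) ∈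
      Set.range fun e : A ⟶ B' =>
        (c ∘ (Equiv.ofBijective _ hbij).symm) (e ≫ sigmaFiberHom U B' Z ⟨Bh, wh⟩) := by
    rintro X _ ⟨f, rfl⟩
    refine ⟨sigmaFiberHom U A Bh.1 ⟨X.1, f ≫ d X⟩ ≫ eqToHom Bh.2, ?_⟩
    have hcomp : (sigmaFiberHom U A Bh.1 ⟨X.1, f ≫ d X⟩ ≫ eqToHom Bh.2) ≫
        sigmaFiberHom U B' Z ⟨Bh, wh⟩ = sigmaFiberHom U A Z ⟨X.1, f ≫ d X ≫ wh⟩ := by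
      simp [sigmaFiberHom]
    dsimp only
    rw [Function.comp_apply, hcomp, Equiv.ofBijective_symm_apply_apply]
    exact dif_pos X.2
  calc ∑ X ∈ s, p X = ∑ X : s, p X := (Finset.sum_coe_sort s p).symm
    _ ≤ ∑ X : s, (palette X).ncard := Finset.sum_le_sum fun X _ => hχ X _
    _ ≤ _ := Set.sum_ncard_le_ncard_of_sigma_mk_mem (fun _ => Set.toFinite _) (Set.toFinite _)
        hpalette
    _ ≤ n := hw

lemma tsum_fiber_ramseyDeg_le
    (hdir : ∀ X Y : D, ∃ Z : D, Nonempty (X ⟶ Z) ∧ Nonempty (Y ⟶ Z))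
    (hsurj : ObjSurjective U) (hinj : HomInjective U) (hur : HasUniqueRestrictions U)
    (hexp : ExpansionProperty U) (A : C) :
    ∑' X : {X : D // U.obj X = A}, ramseyDeg D X.1 ≤ ramseyDeg C A := by
  by_cases htop : ramseyDeg C A = ⊤
  · exact htop ▸ le_top
  obtain ⟨n, hn, hdeg⟩ := exists_isRamseyBound_of_ramseyDeg_ne_top htop
  rw [hdeg]
  exact tsum_le_of_sum_le' zero_le fun s => ENat.sum_le_of_forall_natCast_le fun p hp =>
    sum_le_of_isRamseyBound hdir hsurj hinj hur hexp hn s p hp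

theorem stmt19_general (U : D ⥤ C)
    (hdir : ∀ X Y : D, ∃ Z : D, Nonempty (X ⟶ Z) ∧ Nonempty (Y ⟶ Z))
    (hsurj : ObjSurjective U) (hinj : HomInjective U)
    (hur : HasUniqueRestrictions U)
    (hexp : ExpansionProperty U) (A : C) :
    ramseyDeg C A = ∑' X : {Z : D // U.obj Z = A}, ramseyDeg D X.1 ∧
    (ramseyDeg C A ≠ ⊤ ↔
      ({Z : D | U.obj Z = A}.Finite ∧
        ∀ X : D, U.obj X = A → ramseyDeg D X ≠ ⊤)) := by
  have hfinite := ENat.tsum_ne_top_iff fun X : {Z : D // U.obj Z = A} => ramseyDeg_ne_zero X.1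
  have heq : ramseyDeg C A = ∑' X : {Z : D // U.obj Z = A}, ramseyDeg D X.1 := by
    refine le_antisymm ?_ (tsum_fiber_ramseyDeg_le hdir hsurj hinj hur hexp A)
    by_cases htop : ∑' X : {Z : D // U.obj Z = A}, ramseyDeg D X.1 = ⊤
    · exact htop ▸ le_top
    obtain ⟨_, hne⟩ := hfinite.1 htop
    exact ramseyDeg_le_tsum_fiber hsurj hur hne
  exact ⟨heq, heq ▸ hfinite.trans (and_congr Set.finite_coe_iff Subtype.forall)⟩

theorem stmt19 (U : D ⥤ C)
    (hmono : ∀ {X Y : C} (f : X ⟶ Y), Mono f)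
    (hdir : ∀ X Y : D, ∃ Z : D, Nonempty (X ⟶ Z) ∧ Nonempty (Y ⟶ Z))
    (hsurj : ObjSurjective U) (hinj : HomInjective U)
    (hreas : Reasonable U) (hur : HasUniqueRestrictions U)
    (hexp : ExpansionProperty U) (A : C) :
    ramseyDeg C A = ∑' X : {Z : D // U.obj Z = A}, ramseyDeg D X.1 ∧
    (ramseyDeg C A ≠ ⊤ ↔
      ({Z : D | U.obj Z = A}.Finite ∧
        ∀ X : D, U.obj X = A → ramseyDeg D X ≠ ⊤)) :=
  stmt19_general U hdir hsurj hinj hur hexp A
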